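/- arXiv:2302.04083 — 2 statements merged into one kernel-verified Lean document; each statement's English description precedes it below -/
import Mathlib

section
/- Let W ∈ ℝ^{m×m} be a symmetric matrix satisfying W·1 = 1, let P := (1/m)·1·1ᵀ, and suppose λ := ‖W − P‖ (ℓ2 operator norm) satisfies λ < 1. Let (Zᵗ)_{t≥0} be matrices in ℝ^{m×d}, define X⁰ = 0 and Xᵗ⁺¹ = W Zᵗ, and suppose that ‖Xʲ − Zʲ‖_F² ≤ m B² for every j ≥ 0, where ‖·‖_F is the Frobenius norm and B ≥ 0. Then for every t ≥ 0, denoting by xᵗ(i) the i-th row of Xᵗ and by x̄ᵗ := (1/m)∑_{i=1}^m xᵗ(i) the row average, one has (1/m)∑_{i=1}^m ‖xᵗ(i) − x̄ᵗ‖² ≤ B²/(1−λ)². -/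
open scoped Matrix

/-- The ℓ2 operator norm of a real square matrix. -/
noncomputable def l2OpNorm {m : ℕ} (A : Matrix (Fin m) (Fin m) ℝ) : ℝ :=
  ‖Matrix.toEuclideanCLM (𝕜 := ℝ) A‖

/-- The averaging matrix `P := (1/m)·1·1ᵀ`. -/
noncomputable def avgMatrix (m : ℕ) : Matrix (Fin m) (Fin m) ℝ :=
  (m : ℝ)⁻¹ • Matrix.vecMulVec (fun _ => (1 : ℝ)) (fun _ => (1 : ℝ))

/-!
With `P` the averaging matrix, `PW = WP = P² = P`, so the consensus error `Eᵗ := Xᵗ - PXᵗ`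
satisfies `Eᵗ⁺¹ = (W - P)(Eᵗ + (Zᵗ - Xᵗ))`. As `‖MA‖_F ≤ ‖M‖₂ ‖A‖_F`, the Frobenius norms
`eₜ := ‖Eᵗ‖_F` obey `e₀ = 0` and `eₜ₊₁ ≤ λ (eₜ + √m B)`, so they never exceed the fixed point
`λ √m B / (1 - λ) ≤ √m B / (1 - λ)`.
-/

attribute [local instance] Matrix.frobeniusNormedAddCommGroup

open Matrix WithLp

lemma Matrix.frobenius_norm_sq_eq_sum_row_norm_sq {m n : Type*} [Fintype m] [Fintype n]
    (A : Matrix m n ℝ) : ‖A‖ ^ 2 = ∑ i, ‖toLp 2 (A i)‖ ^ 2 :=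
  PiLp.norm_sq_eq_of_L2 _ (toLp 2 fun i => toLp 2 (A i))

lemma Matrix.frobenius_norm_sq_eq_sum_sq {m n : Type*} [Fintype m] [Fintype n]
    (A : Matrix m n ℝ) : ‖A‖ ^ 2 = ∑ i, ∑ j, A i j ^ 2 := by
  simp only [frobenius_norm_sq_eq_sum_row_norm_sq, EuclideanSpace.real_norm_sq_eq]

lemma frobenius_norm_mul_le_l2OpNorm_mul {m : ℕ} {ι : Type*} [Fintype ι]
    (M : Matrix (Fin m) (Fin m) ℝ) (A : Matrix (Fin m) ι ℝ) :
    ‖M * A‖ ≤ l2OpNorm M * ‖A‖ := by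
  have hcol : ∀ k, toLp 2 ((M * A)ᵀ k) = toEuclideanCLM (𝕜 := ℝ) M (toLp 2 (Aᵀ k)) :=
    fun _ => rfl
  have hsq : ‖M * A‖ ^ 2 ≤ (l2OpNorm M * ‖A‖) ^ 2 := by
    rw [← frobenius_norm_transpose (M * A), ← frobenius_norm_transpose A, mul_pow,
      frobenius_norm_sq_eq_sum_row_norm_sq, frobenius_norm_sq_eq_sum_row_norm_sq, Finset.mul_sum]
    gcongr with k
    rw [hcol, ← mul_pow]
    gcongr
    exact ContinuousLinearMap.le_opNorm _ _
  exact (pow_le_pow_iff_left₀ (norm_nonneg _) (by unfold l2OpNorm; positivity) two_ne_zero).1 hsq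

lemma avgMatrix_apply {m : ℕ} (i j : Fin m) : avgMatrix m i j = (m : ℝ)⁻¹ := by
  simp [avgMatrix, vecMulVec_apply]

lemma mul_avgMatrix {m : ℕ} {W : Matrix (Fin m) (Fin m) ℝ}
    (hW : W *ᵥ (fun _ => 1) = fun _ => 1) : W * avgMatrix m = avgMatrix m := by
  rw [avgMatrix, mul_smul_comm, mul_vecMulVec, hW]

lemma avgMatrix_mul {m : ℕ} {W : Matrix (Fin m) (Fin m) ℝ}
    (hW : (fun _ => 1) ᵥ* W = fun _ => 1) : avgMatrix m * W = avgMatrix m := by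
  rw [avgMatrix, smul_mul_assoc, vecMulVec_mul, hW]

lemma avgMatrix_mulVec_one (m : ℕ) : avgMatrix m *ᵥ (fun _ => 1) = fun _ => 1 := by
  ext i
  have : (m : ℝ) ≠ 0 := Nat.cast_ne_zero.2 (Fin.pos i).ne'
  simp [mulVec, dotProduct, avgMatrix_apply, this]

lemma avgMatrix_mul_self (m : ℕ) : avgMatrix m * avgMatrix m = avgMatrix m :=
  mul_avgMatrix (avgMatrix_mulVec_one m)

lemma sub_avgMatrix_mul_apply {m : ℕ} {ι : Type*} (X : Matrix (Fin m) ι ℝ) (i : Fin m) (k : ι) :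
    (X - avgMatrix m * X) i k = X i k - (m : ℝ)⁻¹ * ∑ i', X i' k := by
  simp [Matrix.mul_apply, avgMatrix_apply, Finset.mul_sum]

lemma mul_sub_mul_mul_eq_sub_mul_add {n ι R : Type*} [Fintype n] [Ring R] {W P : Matrix n n R}
    (hWP : W * P = P) (hPW : P * W = P) (hPP : P * P = P) (X Z : Matrix n ι R) :
    W * Z - P * (W * Z) = (W - P) * ((X - P * X) + (Z - X)) := by
  simp only [Matrix.mul_add, Matrix.mul_sub, Matrix.sub_mul, ← Matrix.mul_assoc, hWP, hPW, hPP]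
  abel

lemma le_mul_div_one_sub_of_le_mul_add {e : ℕ → ℝ} {L c : ℝ} (hL0 : 0 ≤ L) (hL : L < 1)
    (h0 : e 0 ≤ L * c / (1 - L)) (hsucc : ∀ t, e (t + 1) ≤ L * (e t + c)) :
    ∀ t, e t ≤ L * c / (1 - L) := by
  intro t
  induction t with
  | zero => exact h0
  | succ t ih =>
    calc e (t + 1) ≤ L * (L * c / (1 - L) + c) := (hsucc t).trans (by gcongr)
      _ = L * c / (1 - L) := by field_simp [(sub_pos.2 hL).ne']; ring

theorem consensus_error_bound_DFedSAM_general (m d : ℕ)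
    (W : Matrix (Fin m) (Fin m) ℝ) (hsymm : W.IsSymm)
    (hW1 : W.mulVec (fun _ => (1 : ℝ)) = fun _ => (1 : ℝ))
    (hlam : l2OpNorm (W - avgMatrix m) < 1)
    (B : ℝ)
    (Z X : ℕ → Matrix (Fin m) (Fin d) ℝ)
    (hX0 : X 0 = 0) (hXrec : ∀ t : ℕ, X (t + 1) = W * Z t)
    (hdrift : ∀ j : ℕ, ∑ i, ∑ k, (X j i k - Z j i k) ^ 2 ≤ (m : ℝ) * B ^ 2) :
    ∀ t : ℕ,
      (m : ℝ)⁻¹ * ∑ i, ∑ k, (X t i k - (m : ℝ)⁻¹ * ∑ i', X t i' k) ^ 2 ≤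
        B ^ 2 / (1 - l2OpNorm (W - avgMatrix m)) ^ 2 := by
  set P := avgMatrix m
  set L := l2OpNorm (W - P)
  have hL0 : 0 ≤ L := norm_nonneg _
  have hPW : P * W = P := avgMatrix_mul (by rw [← mulVec_transpose, hsymm.eq, hW1])
  set c := √((m : ℝ) * B ^ 2)
  have hc : ∀ t, ‖Z t - X t‖ ≤ c := fun t => by
    rw [norm_sub_rev, Real.le_sqrt (norm_nonneg _) (by positivity), frobenius_norm_sq_eq_sum_sq]
    exact hdrift t
  have herr : ∀ t, ‖X t - P * X t‖ ≤ L * c / (1 - L) := by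
    refine le_mul_div_one_sub_of_le_mul_add hL0 hlam (by simp [hX0]; positivity) fun t => ?_
    rw [hXrec, mul_sub_mul_mul_eq_sub_mul_add (mul_avgMatrix hW1) hPW (avgMatrix_mul_self m) (X t)]
    refine (frobenius_norm_mul_le_l2OpNorm_mul _ _).trans ?_
    gcongr
    exact (norm_add_le _ _).trans (by gcongr; exact hc t)
  intro t
  simp only [← sub_avgMatrix_mul_apply, ← frobenius_norm_sq_eq_sum_sq]
  calc (m : ℝ)⁻¹ * ‖X t - P * X t‖ ^ 2 ≤ (m : ℝ)⁻¹ * (c / (1 - L)) ^ 2 := by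
        gcongr
        exact (herr t).trans (by gcongr; exact mul_le_of_le_one_left (by positivity) hlam.le)
    _ = (m : ℝ)⁻¹ * (m * B ^ 2) / (1 - L) ^ 2 := by
        rw [div_pow, Real.sq_sqrt (by positivity)]
        ring
    _ ≤ B ^ 2 / (1 - L) ^ 2 := by
        gcongr
        exact inv_mul_left_le (sq_nonneg B)

/-- deterministic core of Lemma D.4 of the paper, the
consensus-error bound for DFedSAM. If `W` is symmetric with `W·1 = 1`,
`λ := ‖W - P‖ < 1`, `X⁰ = 0`, `Xᵗ⁺¹ = W Zᵗ`, and the per-round drift satisfies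
`‖Xʲ - Zʲ‖_F² ≤ m B²` for all `j`, then for every `t`, the average squared
deviation of the rows `xᵗ(i)` of `Xᵗ` from their average `x̄ᵗ` satisfies
`(1/m) ∑ᵢ ‖xᵗ(i) - x̄ᵗ‖² ≤ B²/(1-λ)²`. -/
theorem consensus_error_bound_DFedSAM (m d : ℕ) (hm : 1 ≤ m) (hd : 1 ≤ d)
    (W : Matrix (Fin m) (Fin m) ℝ) (hsymm : W.IsSymm)
    (hW1 : W.mulVec (fun _ => (1 : ℝ)) = fun _ => (1 : ℝ))
    (hlam : l2OpNorm (W - avgMatrix m) < 1)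
    (B : ℝ) (hB : 0 ≤ B)
    (Z X : ℕ → Matrix (Fin m) (Fin d) ℝ)
    (hX0 : X 0 = 0) (hXrec : ∀ t : ℕ, X (t + 1) = W * Z t)
    (hdrift : ∀ j : ℕ, ∑ i, ∑ k, (X j i k - Z j i k) ^ 2 ≤ (m : ℝ) * B ^ 2) :
    ∀ t : ℕ,
      (m : ℝ)⁻¹ * ∑ i, ∑ k, (X t i k - (m : ℝ)⁻¹ * ∑ i', X t i' k) ^ 2 ≤
        B ^ 2 / (1 - l2OpNorm (W - avgMatrix m)) ^ 2 :=
  consensus_error_bound_DFedSAM_general m d W hsymm hW1 hlam B Z X hX0 hXrec hdrift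
end

section
/- Let E be a real inner product space, let f : E → ℝ be differentiable with an L-Lipschitz gradient, and let x₁,…,x_m ∈ E with average x̄ := (1/m)∑_{i=1}^m xᵢ. Let η ≥ 0, K ≥ 0, C₃ ≥ 0 and λ ∈ [0,1), set G := (1/m)∑_{i=1}^m ‖∇f(xᵢ)‖², and suppose that (1/m)∑_{i=1}^m ‖xᵢ − x̄‖² ≤ (η²/(1−λ)²)·(C₃ + 16K²G) and that (1−λ)² > 32L²η²K². Then G ≤ (2L²C₃η² + 2(1−λ)²‖∇f(x̄)‖²) / ((1−λ)² − 32L²η²K²). -/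
/-!
Lipschitz continuity of the gradient and `‖u + v‖² ≤ 2‖u‖² + 2‖v‖²` give
`‖∇f(xᵢ)‖² ≤ 2L²‖xᵢ - x̄‖² + 2‖∇f(x̄)‖²`; averaging and inserting the consensus bound yields
`G ≤ 2L²η²(C₃ + 16K²G)/(1-λ)² + 2‖∇f(x̄)‖²`, in which `G` occurs on the right with
coefficient `32L²η²K²/(1-λ)² < 1`, so the inequality can be solved for `G`.
-/

open Finset

theorem sq_norm_le_of_norm_sub_le {F : Type*} [SeminormedAddCommGroup F] {a b : F} {r : ℝ}
    (h : ‖a - b‖ ≤ r) : ‖a‖ ^ 2 ≤ 2 * r ^ 2 + 2 * ‖b‖ ^ 2 := by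
  have hab : ‖a‖ ≤ r + ‖b‖ := by linarith [norm_le_norm_add_norm_sub' a b]
  calc ‖a‖ ^ 2 ≤ (r + ‖b‖) ^ 2 := pow_le_pow_left₀ (norm_nonneg a) hab 2
    _ ≤ 2 * (r ^ 2 + ‖b‖ ^ 2) := add_sq_le
    _ = 2 * r ^ 2 + 2 * ‖b‖ ^ 2 := by ring

theorem Finset.mean_le_mul_mean_add {ι : Type*} {s : Finset ι} {a b : ι → ℝ} {k c : ℝ}
    (h : ∀ i ∈ s, a i ≤ k * b i + c) (hc : 0 ≤ c) :
    1 / (#s : ℝ) * ∑ i ∈ s, a i ≤ k * (1 / (#s : ℝ) * ∑ i ∈ s, b i) + c := by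
  rcases s.eq_empty_or_nonempty with rfl | hs
  · simpa using hc
  have hsum : ∑ i ∈ s, a i ≤ k * ∑ i ∈ s, b i + #s * c := by
    simpa [sum_add_distrib, mul_sum] using sum_le_sum h
  have hcard : (0 : ℝ) < #s := by exact_mod_cast hs.card_pos
  calc 1 / (#s : ℝ) * ∑ i ∈ s, a i ≤ 1 / (#s : ℝ) * (k * ∑ i ∈ s, b i + #s * c) := by gcongr
    _ = k * (1 / (#s : ℝ) * ∑ i ∈ s, b i) + c := by field_simp

theorem le_div_sub_of_mul_le_add_mul {G D c k : ℝ} (h : G * D ≤ c + k * G) (hk : k < D) :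
    G ≤ c / (D - k) := by
  rw [le_div_iff₀ (sub_pos.2 hk)]
  linarith [mul_sub G D k]

theorem grad_norm_self_bounding_resolution_general
    {E : Type*} [NormedAddCommGroup E] [InnerProductSpace ℝ E] [CompleteSpace E]
    (m : ℕ) (f : E → ℝ) (L : ℝ)
    (hlip : ∀ x y : E, ‖gradient f x - gradient f y‖ ≤ L * ‖x - y‖)
    (x : Fin m → E) (η K C₃ lam : ℝ)
    (hlam1 : lam < 1)
    (G : ℝ) (hG : G = (1 / (m : ℝ)) * ∑ i, ‖gradient f (x i)‖ ^ 2)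
    (hcons : (1 / (m : ℝ)) * ∑ i, ‖x i - (m : ℝ)⁻¹ • ∑ i', x i'‖ ^ 2 ≤
      (η ^ 2 / (1 - lam) ^ 2) * (C₃ + 16 * K ^ 2 * G))
    (hgap : 32 * L ^ 2 * η ^ 2 * K ^ 2 < (1 - lam) ^ 2) :
    G ≤ (2 * L ^ 2 * C₃ * η ^ 2 +
          2 * (1 - lam) ^ 2 * ‖gradient f ((m : ℝ)⁻¹ • ∑ i', x i')‖ ^ 2) /
        ((1 - lam) ^ 2 - 32 * L ^ 2 * η ^ 2 * K ^ 2) := by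
  set xb : E := (m : ℝ)⁻¹ • ∑ i', x i'
  set S := 1 / (m : ℝ) * ∑ i, ‖x i - xb‖ ^ 2
  set N := ‖gradient f xb‖ ^ 2
  set D := (1 - lam) ^ 2
  have hD : 0 < D := pow_pos (sub_pos.2 hlam1) 2
  have hgrad : G ≤ 2 * L ^ 2 * S + 2 * N := by
    have hpt (i : Fin m) : ‖gradient f (x i)‖ ^ 2 ≤ 2 * L ^ 2 * ‖x i - xb‖ ^ 2 + 2 * N := by
      linarith [mul_pow L ‖x i - xb‖ 2, sq_norm_le_of_norm_sub_le (hlip (x i) xb)]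
    rw [hG]
    simpa only [card_fin] using mean_le_mul_mean_add (s := univ) (fun i _ => hpt i) (by positivity)
  rw [div_mul_eq_mul_div (η ^ 2), le_div_iff₀ hD] at hcons
  apply le_div_sub_of_mul_le_add_mul _ hgap
  calc G * D ≤ 2 * L ^ 2 * (S * D) + 2 * N * D := by
        linarith [mul_le_mul_of_nonneg_right hgrad hD.le]
    _ ≤ 2 * L ^ 2 * (η ^ 2 * (C₃ + 16 * K ^ 2 * G)) + 2 * N * D := by gcongr
    _ = _ := by ring

/-- the self-bounding resolution step, equation (24), in the
proof of Theorem 4 of the paper. Let `f : E → ℝ` be differentiable with an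
`L`-Lipschitz gradient, `x₁,…,x_m` points with average `x̄`, and set
`G := (1/m)∑ᵢ ‖∇f(xᵢ)‖²`. If the consensus error satisfies
`(1/m)∑ᵢ ‖xᵢ - x̄‖² ≤ (η²/(1-λ)²)(C₃ + 16K²G)` and `(1-λ)² > 32L²η²K²`, then
`G ≤ (2L²C₃η² + 2(1-λ)²‖∇f(x̄)‖²) / ((1-λ)² - 32L²η²K²)`. -/
theorem grad_norm_self_bounding_resolution
    {E : Type*} [NormedAddCommGroup E] [InnerProductSpace ℝ E] [CompleteSpace E]
    (m : ℕ) (hm : 1 ≤ m) (f : E → ℝ) (L : ℝ) (hL : 0 ≤ L)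
    (hdiff : Differentiable ℝ f)
    (hlip : ∀ x y : E, ‖gradient f x - gradient f y‖ ≤ L * ‖x - y‖)
    (x : Fin m → E) (η K C₃ lam : ℝ)
    (hη : 0 ≤ η) (hK : 0 ≤ K) (hC₃ : 0 ≤ C₃) (hlam0 : 0 ≤ lam) (hlam1 : lam < 1)
    (G : ℝ) (hG : G = (1 / (m : ℝ)) * ∑ i, ‖gradient f (x i)‖ ^ 2)
    (hcons : (1 / (m : ℝ)) * ∑ i, ‖x i - (m : ℝ)⁻¹ • ∑ i', x i'‖ ^ 2 ≤
      (η ^ 2 / (1 - lam) ^ 2) * (C₃ + 16 * K ^ 2 * G))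
    (hgap : 32 * L ^ 2 * η ^ 2 * K ^ 2 < (1 - lam) ^ 2) :
    G ≤ (2 * L ^ 2 * C₃ * η ^ 2 +
          2 * (1 - lam) ^ 2 * ‖gradient f ((m : ℝ)⁻¹ • ∑ i', x i')‖ ^ 2) /
        ((1 - lam) ^ 2 - 32 * L ^ 2 * η ^ 2 * K ^ 2) :=
  grad_norm_self_bounding_resolution_general m f L hlip x η K C₃ lam hlam1 G hG hcons hgap
end
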